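/- Let N ≥ 3, r ≥ 1, and fix nonzero complex numbers z_1, ..., z_r. For a permutation σ of {1,...,r} and 1 ≤ t ≤ r+1, set f_{t,σ} := ∏_{j=1}^{t-1} z_{σ(j)} (empty product = 1) and ξ_σ(t) := f_{t,σ}·f_{r+1,σ}⁻¹; let ≺_σ be the order on {1,...,r+1} defined from ξ_σ. Define the permutation σ̃ by σ̃(1) := σ(r) and σ̃(j) := σ(j-1) for 2 ≤ j ≤ r, and let B_σ := {1 ≤ t ≤ r+1 : m(z_{σ(r)}·ξ_σ(t)) ≡ m(z_{σ(r)}) + m(ξ_σ(t)) (mod N)}. Then for all t, t' ∈ {1,...,r}: if both t, t' ∈ B_σ, or both t, t' ∉ B_σ, then t ≺_σ t' if and only if t+1 ≺_{σ̃} t'+1. -/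

import Mathlib

/-!
Passing from `σ` to `σ̃` shifts the index by one and multiplies every `ξ` by the same constant
`c = z_{σ(r)}`, so all ratios `ξ(t') ξ(t)⁻¹` are unchanged. Since `arg` is additive modulo `2π`,
`m(c x) - m(c) - m(x)` is `0` or `-1` modulo `N`, and membership in `B_σ` records which; when
`t` and `t'` lie on the same side of `B_σ` this gives
`m(c ξ(t')) - m(c ξ(t)) ≡ m(ξ(t')) - m(ξ(t))`, which is all the order `≺` sees.
-/

/-- The principal argument of a nonzero complex number, normalized to lie in `[-π, π)`. -/
noncomputable def parg (z : ℂ) : ℝ :=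
  if Complex.arg z = Real.pi then -Real.pi else Complex.arg z

/-- `m(z) := ⌈-N·arg(z)/(2π)⌉` where `arg(z) ∈ [-π, π)`. -/
noncomputable def mfun (N : ℤ) (z : ℂ) : ℤ :=
  ⌈(-(N : ℝ) * parg z) / (2 * Real.pi)⌉

/-- `t ≺ t'` iff `m(ξ(t')·ξ(t)⁻¹) ≡ m(ξ(t')) - m(ξ(t)) (mod N)` and, in addition,
`m(ξ(t')·ξ(t)⁻¹) + m(ξ(t)·ξ(t')⁻¹) ≡ 1 (mod N)` or `t' < t`. -/
def prec (N : ℤ) (ξ : ℕ → ℂ) (t t' : ℕ) : Prop :=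
  mfun N (ξ t' * (ξ t)⁻¹) ≡ mfun N (ξ t') - mfun N (ξ t) [ZMOD N] ∧
  (mfun N (ξ t' * (ξ t)⁻¹) + mfun N (ξ t * (ξ t')⁻¹) ≡ 1 [ZMOD N] ∨ t' < t)

/-- `f_{t,s} := ∏_{j=1}^{t-1} z_{s(j)}` (empty product for `t = 1`). -/
def fprod (z : ℕ → ℂ) (s : ℕ → ℕ) (t : ℕ) : ℂ :=
  ∏ j ∈ Finset.Icc 1 (t - 1), z (s j)

/-- `ξ_s(t) := f_{t,s}·f_{r+1,s}⁻¹`. -/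
noncomputable def xi (r : ℕ) (z : ℕ → ℂ) (s : ℕ → ℕ) (t : ℕ) : ℂ :=
  fprod z s t * (fprod z s (r + 1))⁻¹

/-- `t ∈ B_σ` iff `m(z_{σ(r)}·ξ_σ(t)) ≡ m(z_{σ(r)}) + m(ξ_σ(t)) (mod N)`. -/
def Bmem (N : ℤ) (r : ℕ) (z : ℕ → ℂ) (σ : ℕ → ℕ) (t : ℕ) : Prop :=
  mfun N (z (σ r) * xi r z σ t) ≡ mfun N (z (σ r)) + mfun N (xi r z σ t) [ZMOD N]

lemma coe_parg (z : ℂ) : (parg z : Real.Angle) = Complex.arg z := by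
  unfold parg
  split_ifs with h
  · rw [h, Real.Angle.coe_neg, Real.Angle.neg_coe_pi]
  · rfl

lemma exists_parg_mul_eq {x y : ℂ} (hx : x ≠ 0) (hy : y ≠ 0) :
    ∃ k : ℤ, parg (x * y) = parg x + parg y + 2 * Real.pi * k := by
  have h : (parg (x * y) : Real.Angle) = ((parg x + parg y : ℝ) : Real.Angle) := by
    rw [coe_parg, Complex.arg_mul_coe_angle hx hy, Real.Angle.coe_add, coe_parg, coe_parg]
  obtain ⟨k, hk⟩ := Real.Angle.angle_eq_iff_two_pi_dvd_sub.mp h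
  exact ⟨k, by linarith⟩

lemma mfun_mul_modEq (N : ℤ) {x y : ℂ} (hx : x ≠ 0) (hy : y ≠ 0) :
    mfun N (x * y) ≡ mfun N x + mfun N y [ZMOD N] ∨
      mfun N (x * y) ≡ mfun N x + mfun N y - 1 [ZMOD N] := by
  obtain ⟨k, hk⟩ := exists_parg_mul_eq hx hy
  set X := -(N : ℝ) * parg x / (2 * Real.pi)
  set Y := -(N : ℝ) * parg y / (2 * Real.pi)
  have hxy : mfun N (x * y) = ⌈X + Y⌉ - N * k := by
    have : -(N : ℝ) * parg (x * y) / (2 * Real.pi) = X + Y - ((N * k : ℤ) : ℝ) := by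
      rw [hk]; simp only [X, Y]; push_cast; field_simp; ring
    rw [mfun, this, Int.ceil_sub_intCast]
  have hmod : mfun N (x * y) ≡ ⌈X + Y⌉ [ZMOD N] :=
    Int.modEq_iff_dvd.mpr ⟨k, by rw [hxy]; ring⟩
  have hle := Int.ceil_add_le X Y
  have hge := Int.ceil_add_ceil_le X Y
  rcases (by omega : ⌈X + Y⌉ = ⌈X⌉ + ⌈Y⌉ ∨ ⌈X + Y⌉ = ⌈X⌉ + ⌈Y⌉ - 1) with h | h
  · exact Or.inl (h ▸ hmod)
  · exact Or.inr (h ▸ hmod)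

lemma mfun_mul_sub_mul_modEq {N : ℤ} {c x x' : ℂ} (hc : c ≠ 0) (hx : x ≠ 0) (hx' : x' ≠ 0)
    (hB : mfun N (c * x) ≡ mfun N c + mfun N x [ZMOD N] ↔
      mfun N (c * x') ≡ mfun N c + mfun N x' [ZMOD N]) :
    mfun N (c * x') - mfun N (c * x) ≡ mfun N x' - mfun N x [ZMOD N] := by
  by_cases h : mfun N (c * x) ≡ mfun N c + mfun N x [ZMOD N]
  · convert (hB.mp h).sub h using 1
    ring
  · have h₁ := (mfun_mul_modEq N hc hx).resolve_left h
    have h₂ := (mfun_mul_modEq N hc hx').resolve_left (mt hB.mpr h)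
    convert h₂.sub h₁ using 1
    ring

lemma prec_iff_prec_of_eq_mul {N : ℤ} {ξ ξ' : ℕ → ℂ} {c : ℂ} {t t' s s' : ℕ} (hc : c ≠ 0)
    (hs : ξ' s = c * ξ t) (hs' : ξ' s' = c * ξ t') (hlt : s' < s ↔ t' < t)
    (hm : mfun N (c * ξ t') - mfun N (c * ξ t) ≡ mfun N (ξ t') - mfun N (ξ t) [ZMOD N]) :
    prec N ξ t t' ↔ prec N ξ' s s' := by
  simp only [prec, hs, hs', ← div_eq_mul_inv, mul_div_mul_left _ _ hc, hlt]
  exact and_congr_left' ⟨fun h => h.trans hm.symm, fun h => h.trans hm⟩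

lemma fprod_succ (z : ℕ → ℂ) (s : ℕ → ℕ) {t : ℕ} (ht : 1 ≤ t) :
    fprod z s (t + 1) = fprod z s t * z (s t) := by
  obtain ⟨n, rfl⟩ : ∃ n, t = n + 1 := ⟨t - 1, by omega⟩
  simp only [fprod, Nat.add_sub_cancel]
  exact Finset.prod_Icc_succ_top (by omega) _

section Rotation

variable {r : ℕ} {z : ℕ → ℂ} {σ σt : ℕ → ℕ}

lemma fprod_rotate (hσt1 : σt 1 = σ r) (hσtj : ∀ j, 2 ≤ j → j ≤ r → σt j = σ (j - 1))
    {t : ℕ} (ht : 1 ≤ t) (htr : t ≤ r) :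
    fprod z σt (t + 1) = z (σ r) * fprod z σ t := by
  induction t, ht using Nat.le_induction with
  | base => simp [fprod, hσt1]
  | succ n hn ih =>
    rw [fprod_succ z σt (by omega), ih (by omega), hσtj (n + 1) (by omega) htr,
      Nat.add_sub_cancel, fprod_succ z σ hn, mul_assoc]

lemma xi_rotate (hσt1 : σt 1 = σ r) (hσtj : ∀ j, 2 ≤ j → j ≤ r → σt j = σ (j - 1))
    {t : ℕ} (ht : 1 ≤ t) (htr : t ≤ r) :
    xi r z σt (t + 1) = z (σ r) * xi r z σ t := by
  have hr : 1 ≤ r := ht.trans htr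
  have htotal : fprod z σt (r + 1) = fprod z σ (r + 1) := by
    rw [fprod_rotate hσt1 hσtj hr le_rfl, fprod_succ z σ hr, mul_comm]
  rw [xi, xi, fprod_rotate hσt1 hσtj ht htr, htotal, mul_assoc]

end Rotation

theorem stmt9_general (N : ℤ) (r : ℕ)
    (z : ℕ → ℂ) (hz : ∀ j ∈ Finset.Icc 1 r, z j ≠ 0)
    (σ : ℕ → ℕ) (hσ : Set.BijOn σ (Set.Icc 1 r) (Set.Icc 1 r))
    (σt : ℕ → ℕ) (hσt1 : σt 1 = σ r) (hσtj : ∀ j, 2 ≤ j → j ≤ r → σt j = σ (j - 1))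
    (t t' : ℕ) (ht : t ∈ Finset.Icc 1 r) (ht' : t' ∈ Finset.Icc 1 r)
    (hB : (Bmem N r z σ t ∧ Bmem N r z σ t') ∨ (¬ Bmem N r z σ t ∧ ¬ Bmem N r z σ t')) :
    prec N (xi r z σ) t t' ↔ prec N (xi r z σt) (t + 1) (t' + 1) := by
  rw [Finset.mem_Icc] at ht ht'
  have hzσ : ∀ j, 1 ≤ j → j ≤ r → z (σ j) ≠ 0 := fun j h1 h2 =>
    hz _ (Finset.mem_Icc.mpr (hσ.mapsTo (Set.mem_Icc.mpr ⟨h1, h2⟩)))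
  have hfprod : ∀ s, s ≤ r + 1 → fprod z σ s ≠ 0 := fun s hs =>
    Finset.prod_ne_zero_iff.mpr fun j hj => by
      rw [Finset.mem_Icc] at hj
      exact hzσ j hj.1 (by omega)
  have hxi : ∀ s, s ≤ r + 1 → xi r z σ s ≠ 0 := fun s hs =>
    mul_ne_zero (hfprod s hs) (inv_ne_zero (hfprod _ le_rfl))
  have hc := hzσ r (ht.1.trans ht.2) le_rfl
  exact prec_iff_prec_of_eq_mul hc (xi_rotate hσt1 hσtj ht.1 ht.2)
    (xi_rotate hσt1 hσtj ht'.1 ht'.2) (by omega)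
    (mfun_mul_sub_mul_modEq hc (hxi t (by omega)) (hxi t' (by omega))
      (iff_iff_and_or_not_and_not.mpr hB))

theorem stmt9 (N : ℤ) (hN : 3 ≤ N) (r : ℕ) (hr : 1 ≤ r)
    (z : ℕ → ℂ) (hz : ∀ j ∈ Finset.Icc 1 r, z j ≠ 0)
    (σ : ℕ → ℕ) (hσ : Set.BijOn σ (Set.Icc 1 r) (Set.Icc 1 r))
    (σt : ℕ → ℕ) (hσt1 : σt 1 = σ r) (hσtj : ∀ j, 2 ≤ j → j ≤ r → σt j = σ (j - 1))
    (t t' : ℕ) (ht : t ∈ Finset.Icc 1 r) (ht' : t' ∈ Finset.Icc 1 r)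
    (hB : (Bmem N r z σ t ∧ Bmem N r z σ t') ∨ (¬ Bmem N r z σ t ∧ ¬ Bmem N r z σ t')) :
    prec N (xi r z σ) t t' ↔ prec N (xi r z σt) (t + 1) (t' + 1) :=
  stmt9_general N r z hz σ hσ σt hσt1 hσtj t t' ht ht' hB
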